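/- Fix $k \ge 1$. Let $\mathcal{N}$ be any word in the operators $A,B,C,D,E$ (possibly empty) and $G \in \{C, D, E\}$. If $G\,\mathcal{N}([1,0,z_2])$ is nonzero, then every component of its vector part contains a factor $z_2$; consequently, its vector part $[z_2 P, z_2 Q, z_2 R]$ equals $z_2^k [P,Q,R]$, i.e., carries an overall factor $z_2^k$. -/
import Mathlib


/-- The five letters `A,B,C,D,E` labelling the extremal operators. -/
inductive Letter | A | B | C | D | E
deriving DecidableEq

namespace VectorPart

/-- A monomial `q^a z₁^b z₂^c` is recorded by its exponents `(a,b,c) ∈ ℤ³`;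
`none` records a zero entry.  A vector part `[P,Q,R]` is a triple of such. -/
abbrev Mon := Option (ℤ × ℤ × ℤ)

/-- The shift `S` (substitution `z₂ ↦ q z₂`) on monomials: `q^a z₁^b z₂^c ↦ q^{a+c} z₁^b z₂^c`. -/
def shiftM : Mon → Mon := Option.map fun x => (x.1 + x.2.2, x.2.1, x.2.2)

/-- Multiplication by `q⁻¹ z₂`. -/
def qInvZ2 : Mon → Mon := Option.map fun x => (x.1 - 1, x.2.1, x.2.2 + 1)

/-- Multiplication by `z₁ z₂`. -/
def z1z2 : Mon → Mon := Option.map fun x => (x.1, x.2.1 + 1, x.2.2 + 1)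

/-- The action of the extremal operators on vector parts `t = [P,Q,R]`
(`t 0 = P`, `t 1 = Q`, `t 2 = R`):
`A : [P,Q,R] ↦ S[P,Q,q⁻¹z₂P]`, `B : [P,Q,R] ↦ S[P,R,q⁻¹z₂P]`,
`C : [P,Q,R] ↦ S[z₁z₂Q,Q,q⁻¹z₂P]`, `D : [P,Q,R] ↦ S[z₁z₂Q,R,q⁻¹z₂P]`,
`E : [P,Q,R] ↦ S[R,R,q⁻¹z₂P]`. -/
def lact : Letter → (Fin 3 → Mon) → (Fin 3 → Mon)
  | Letter.A, t => fun j => shiftM (![t 0, t 1, qInvZ2 (t 0)] j)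
  | Letter.B, t => fun j => shiftM (![t 0, t 2, qInvZ2 (t 0)] j)
  | Letter.C, t => fun j => shiftM (![z1z2 (t 1), t 1, qInvZ2 (t 0)] j)
  | Letter.D, t => fun j => shiftM (![z1z2 (t 1), t 2, qInvZ2 (t 0)] j)
  | Letter.E, t => fun j => shiftM (![t 2, t 2, qInvZ2 (t 0)] j)

/-- The action of a word (read left to right, the rightmost letter acting first):
for `𝒩 = G₁…Gₙ`, `wact 𝒩 v = G₁(G₂(⋯(Gₙ v)))`. -/
def wact : List Letter → (Fin 3 → Mon) → (Fin 3 → Mon)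
  | [], t => t
  | G :: M, t => lact G (wact M t)

/-- The vector part of `[1, 0, z₂]`. -/
def v0 : Fin 3 → Mon := ![some (0, 0, 0), none, some (0, 0, 1)]

/-- `z₂`-degree lower bound predicate on monomials. -/
def zge (n : ℤ) (m : Mon) : Prop := ∀ a b c : ℤ, m = some (a, b, c) → n ≤ c

lemma zge_shiftM {n : ℤ} {m : Mon} (h : zge n m) : zge n (shiftM m) := by
  intro a b c hc
  cases m with
  | none => simp [shiftM] at hc
  | some x =>
    obtain ⟨x1, x2, x3⟩ := x
    simp [shiftM] at hc
    obtain ⟨h1, h2, h3⟩ := hc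
    have := h x1 x2 x3 rfl
    omega

lemma zge_qInvZ2 {n : ℤ} {m : Mon} (h : zge n m) : zge (n + 1) (qInvZ2 m) := by
  intro a b c hc
  cases m with
  | none => simp [qInvZ2] at hc
  | some x =>
    obtain ⟨x1, x2, x3⟩ := x
    simp [qInvZ2] at hc
    obtain ⟨h1, h2, h3⟩ := hc
    have := h x1 x2 x3 rfl
    omega

lemma zge_z1z2 {n : ℤ} {m : Mon} (h : zge n m) : zge (n + 1) (z1z2 m) := by
  intro a b c hc
  cases m with
  | none => simp [z1z2] at hc
  | some x =>
    obtain ⟨x1, x2, x3⟩ := x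
    simp [z1z2] at hc
    obtain ⟨h1, h2, h3⟩ := hc
    have := h x1 x2 x3 rfl
    omega

lemma zge_mono {n n' : ℤ} {m : Mon} (hn : n' ≤ n) (h : zge n m) : zge n' m := by
  intro a b c hc; exact le_trans hn (h a b c hc)

lemma inv_word (N : List Letter) :
    zge 0 (wact N v0 0) ∧ zge 1 (wact N v0 1) ∧ zge 1 (wact N v0 2) := by
  induction N with
  | nil =>
    refine ⟨?_, ?_, ?_⟩ <;> intro a b c hc <;>
      simp only [wact, v0, Matrix.cons_val_zero, Matrix.cons_val_one, Matrix.head_cons,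
        Matrix.cons_val_two, Matrix.tail_cons, Option.some.injEq, Prod.mk.injEq,
        reduceCtorEq] at hc <;> omega
  | cons G M ih =>
    obtain ⟨h0, h1, h2⟩ := ih
    cases G <;>
      refine ⟨?_, ?_, ?_⟩ <;>
      simp only [wact, lact, Matrix.cons_val_zero, Matrix.cons_val_one,
        Matrix.head_cons, Matrix.cons_val_two, Matrix.tail_cons]
    · exact zge_shiftM h0
    · exact zge_shiftM h1
    · exact zge_shiftM (zge_mono (by omega) (zge_qInvZ2 h0))
    · exact zge_shiftM h0
    · exact zge_shiftM h2
    · exact zge_shiftM (zge_mono (by omega) (zge_qInvZ2 h0))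
    · exact zge_shiftM (zge_mono (by omega) (zge_z1z2 h1))
    · exact zge_shiftM h1
    · exact zge_shiftM (zge_mono (by omega) (zge_qInvZ2 h0))
    · exact zge_shiftM (zge_mono (by omega) (zge_z1z2 h1))
    · exact zge_shiftM h2
    · exact zge_shiftM (zge_mono (by omega) (zge_qInvZ2 h0))
    · exact zge_shiftM (zge_mono (by omega) h2)
    · exact zge_shiftM h2
    · exact zge_shiftM (zge_mono (by omega) (zge_qInvZ2 h0))

/-- If `G ∈ {C,D,E}` and `G𝒩([1,0,z₂])` is nonzero (here: no slot of its vector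
part has degenerated to zero), then every component of its vector part contains
a factor `z₂`, i.e. every slot is a monomial `q^a z₁^b z₂^c` with `c ≥ 1`;
consequently the vector part factors as `z₂^k [P,Q,R]`. -/
theorem factor_z2_of_CDE (G : Letter) (hG : G = Letter.C ∨ G = Letter.D ∨ G = Letter.E)
    (N : List Letter) (hnz : ∀ j, wact (G :: N) v0 j ≠ none) :
    ∀ j, ∃ a b c : ℤ, wact (G :: N) v0 j = some (a, b, c) ∧ 1 ≤ c := by
  obtain ⟨h0, h1, h2⟩ := inv_word N
  have key : ∀ j, zge 1 (wact (G :: N) v0 j) := by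
    intro j
    fin_cases j
    · rcases hG with rfl | rfl | rfl <;>
        simp only [wact, lact, Matrix.cons_val_zero]
      · exact zge_shiftM (zge_mono (by omega) (zge_z1z2 h1))
      · exact zge_shiftM (zge_mono (by omega) (zge_z1z2 h1))
      · exact zge_shiftM h2
    · exact (inv_word (G :: N)).2.1
    · exact (inv_word (G :: N)).2.2
  intro j
  cases hm : wact (G :: N) v0 j with
  | none => exact absurd hm (hnz j)
  | some x =>
    obtain ⟨a, b, c⟩ := x
    exact ⟨a, b, c, rfl, key j a b c hm⟩

end VectorPart
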